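/- arXiv:1004.5188 — 6 statements merged into one kernel-verified Lean document; each statement's English description precedes it below -/
import Mathlib

section
/- (Viète's formula, nested radical form) The sequence 4^{(i+1)/2} · sqrt(2 - h_i), where h_0 = 0 and h_{i+1} = sqrt(2 + h_i), converges to π as i → ∞. -/
/-!
The recursion defining `h` is that of `Real.sqrtTwoAddSeries 0`, and
`2 ^ (i + 1) * √(2 - sqrtTwoAddSeries 0 i) = 2 ^ (i + 2) * sin (π / 2 ^ (i + 2))`.
By `x - x ^ 3 / 6 < sin x < x`, this half-perimeter of a regular `2 ^ (i + 2)`-gon inscribed in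
the unit circle lies within `1 / 4 ^ i` below `π` (`Real.pi_gt_sqrtTwoAddSeries`,
`Real.pi_lt_sqrtTwoAddSeries`), so it converges to `π` by squeezing.
-/

open Real Filter Topology

theorem Real.eq_sqrtTwoAddSeries_zero {h : ℕ → ℝ} (h0 : h 0 = 0)
    (hrec : ∀ i, h (i + 1) = √(2 + h i)) : h = sqrtTwoAddSeries 0 := by
  funext i
  induction i with
  | zero => simp [h0]
  | succ i ih => simp [hrec, ih]

theorem Real.tendsto_two_pow_mul_sqrt_two_sub_sqrtTwoAddSeries :
    Tendsto (fun n : ℕ => 2 ^ (n + 1) * √(2 - sqrtTwoAddSeries 0 n)) atTop (𝓝 π) := by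
  have hgap : Tendsto (fun n : ℕ => π - 1 / 4 ^ n) atTop (𝓝 π) := by
    simpa using tendsto_const_nhds.sub
      (tendsto_pow_atTop_nhds_zero_of_lt_one (by norm_num : (0 : ℝ) ≤ 1 / 4) (by norm_num))
  refine tendsto_of_tendsto_of_tendsto_of_le_of_le hgap tendsto_const_nhds (fun n => ?_)
    (fun n => (pi_gt_sqrtTwoAddSeries n).le)
  linarith [pi_lt_sqrtTwoAddSeries n]

theorem stmt_4 (h : ℕ → ℝ) (h0 : h 0 = 0)
    (hrec : ∀ i, h (i + 1) = Real.sqrt (2 + h i)) :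
    Filter.Tendsto (fun i => (2 : ℝ) ^ (i + 1) * Real.sqrt (2 - h i))
      Filter.atTop (nhds Real.pi) := by
  rw [eq_sqrtTwoAddSeries_zero h0 hrec]
  exact tendsto_two_pow_mul_sqrt_two_sub_sqrtTwoAddSeries
end

section
/- For x > 1 and all i, the Pi-function satisfies the recursion Π_{i+1}(x)² = 2x · Π_i(x)² + (2x)^{i+2} · (h_i(x) − h_{i+1}(x)), where Π_i(x) = (2x)^{(i+1)/2} · sqrt(x − h_i(x)). -/
lemma Real.rpow_div_two_sq {a : ℝ} (ha : 0 ≤ a) (r : ℝ) : (a ^ (r / 2)) ^ 2 = a ^ r := by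
  rw [← Real.rpow_natCast, ← Real.rpow_mul ha]
  norm_num

lemma Real.rpow_succ_div_two_mul_sqrt_sq {a b : ℝ} (ha : 0 ≤ a) (hb : 0 ≤ b) (n : ℕ) :
    (a ^ (((n : ℝ) + 1) / 2) * √b) ^ 2 = a ^ (n + 1) * b := by
  rw [mul_pow, Real.rpow_div_two_sq ha, Real.sq_sqrt hb, ← Nat.cast_add_one, Real.rpow_natCast]

theorem stmt_9_general (x : ℝ) (hx : 1 < x) (h : ℕ → ℝ)
    (hle : ∀ i, h i ≤ x)
    (Pi : ℕ → ℝ)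
    (hPi : ∀ i, Pi i = (2 * x) ^ (((i : ℝ) + 1) / 2) * Real.sqrt (x - h i)) :
    ∀ i, Pi (i + 1) ^ 2 = 2 * x * Pi i ^ 2 + (2 * x) ^ (i + 2) * (h i - h (i + 1)) := by
  have hPi_sq (j : ℕ) : Pi j ^ 2 = (2 * x) ^ (j + 1) * (x - h j) := by
    rw [hPi j, Real.rpow_succ_div_two_mul_sqrt_sq (by linarith) (sub_nonneg.2 (hle j))]
  intro i
  rw [hPi_sq, hPi_sq]
  ring

theorem stmt_9 (x : ℝ) (hx : 1 < x) (h : ℕ → ℝ) (h0 : h 0 = 0)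
    (hrec : ∀ i, h (i + 1) = Real.sqrt (x * (x - 1) + h i))
    (hle : ∀ i, h i ≤ x)
    (Pi : ℕ → ℝ)
    (hPi : ∀ i, Pi i = (2 * x) ^ (((i : ℝ) + 1) / 2) * Real.sqrt (x - h i)) :
    ∀ i, Pi (i + 1) ^ 2 = 2 * x * Pi i ^ 2 + (2 * x) ^ (i + 2) * (h i - h (i + 1)) :=
  stmt_9_general x hx h hle Pi hPi
end

section
/- For x > 1 and all i, Π_i(1−x)² = ((1/x) − 1)^{i+1} · Π_i(x)² − 2^{i+1} (1−x)^{i+1} (2x−1), where Π_i(y)² = (2y)^{i+1} (y − h_i(y)) and h_i(1−x) = h_i(x). -/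
/-! Since `(1 - x) * ((1 - x) - 1) = x * (x - 1)`, the recursion for `h` takes the same input at
`1 - x` as at `x`, so `h (1 - x) i = h x i`; the identity is then linear in `h x i`, and its
coefficients match because `(1 / x - 1) * (2 * x) = 2 * (1 - x)`. -/

theorem eq_of_mul_sub_one_eq {h : ℝ → ℕ → ℝ} (h0 : ∀ y, h y 0 = 0)
    (hrec : ∀ y i, h y (i + 1) = Real.sqrt (y * (y - 1) + h y i)) {a b : ℝ}
    (hab : a * (a - 1) = b * (b - 1)) (i : ℕ) : h a i = h b i := by
  induction i with
  | zero => rw [h0, h0]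
  | succ n ih => rw [hrec, hrec, ih, hab]

theorem one_div_sub_one_mul_two_mul {x : ℝ} (hx : x ≠ 0) :
    (1 / x - 1) * (2 * x) = 2 * (1 - x) := by
  field_simp

theorem stmt_11 (x : ℝ) (hx : 1 < x) (h : ℝ → ℕ → ℝ) (h0 : ∀ y, h y 0 = 0)
    (hrec : ∀ y i, h y (i + 1) = Real.sqrt (y * (y - 1) + h y i)) :
    ∀ i : ℕ,
      (2 * (1 - x)) ^ (i + 1) * ((1 - x) - h (1 - x) i) =
        (1 / x - 1) ^ (i + 1) * ((2 * x) ^ (i + 1) * (x - h x i)) -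
          2 ^ (i + 1) * (1 - x) ^ (i + 1) * (2 * x - 1) := by
  intro i
  have h_symm : h (1 - x) i = h x i := eq_of_mul_sub_one_eq h0 hrec (by ring) i
  have h_coeff : (1 / x - 1) ^ (i + 1) * (2 * x) ^ (i + 1) = (2 * (1 - x)) ^ (i + 1) := by
    rw [← mul_pow, one_div_sub_one_mul_two_mul (by linarith)]
  rw [h_symm, ← mul_assoc, h_coeff, ← mul_pow]
  ring
end

section
/- For x > 1, the limit π_x = lim_{i→∞} (2x)^{(i+1)/2} sqrt(x − h_i(x)) exists and is finite, where h_0 = 0 and h_{i+1} = sqrt(x(x−1) + h_i). -/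
/-!
Write `εₙ = x - hₙ`. Since `hₙ₊₁² = x² - εₙ`, we have `εₙ = εₙ₊₁ (x + hₙ₊₁)` with
`0 ≤ hₙ₊₁ ≤ x`, so `εₙ₊₁ ≤ εₙ / x` and `∑ εₙ` converges geometrically. The sequence
`aₙ = (2x)ⁿ⁺¹ εₙ`, whose square root is the sequence of the theorem, has
`aₙ₊₁ / aₙ = 2x / (x + hₙ₊₁) ∈ [1, 1 + εₙ₊₁ / x]`: it is nondecreasing and bounded by
`a₀ exp (∑ εₖ / x)`, hence convergent.
-/

open Filter Real

lemma bddAbove_range_of_le_mul_one_add {a b : ℕ → ℝ} (ha : ∀ n, 0 ≤ a n) (hb : ∀ n, 0 ≤ b n)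
    (hb_sum : Summable b) (hab : ∀ n, a (n + 1) ≤ a n * (1 + b n)) :
    BddAbove (Set.range a) := by
  have key : ∀ n, a n ≤ a 0 * exp (∑ k ∈ Finset.range n, b k) := by
    intro n
    induction n with
    | zero => simp
    | succ n ih =>
      calc a (n + 1) ≤ a n * (1 + b n) := hab n
        _ ≤ a 0 * exp (∑ k ∈ Finset.range n, b k) * exp (b n) :=
          mul_le_mul ih (by linarith [add_one_le_exp (b n)]) (by linarith [hb n])
            (mul_nonneg (ha 0) (exp_nonneg _))
        _ = a 0 * exp (∑ k ∈ Finset.range (n + 1), b k) := by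
          rw [Finset.sum_range_succ, exp_add, mul_assoc]
  refine ⟨a 0 * exp (∑' k, b k), ?_⟩
  rintro _ ⟨n, rfl⟩
  exact (key n).trans (by gcongr; exacts [ha 0, hb_sum.sum_le_tsum _ fun k _ => hb k])

section

variable {x s : ℝ}

lemma mul_sub_le_sq_sub_sq (hs : 0 ≤ s) (hsx : s ≤ x) : x * (x - s) ≤ x ^ 2 - s ^ 2 := by
  nlinarith

lemma two_mul_mul_sub_le (hx : 0 < x) (hs : 0 ≤ s) :
    2 * x * (x - s) ≤ (x ^ 2 - s ^ 2) * (1 + (x - s) / x) := by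
  have gap : (x ^ 2 - s ^ 2) * (1 + (x - s) / x) - 2 * x * (x - s) = s * (x - s) ^ 2 / x := by
    field_simp
    ring
  have : 0 ≤ s * (x - s) ^ 2 / x := by positivity
  linarith

end

noncomputable def nestedSqrt (x : ℝ) : ℕ → ℝ
  | 0 => 0
  | n + 1 => √(x * (x - 1) + nestedSqrt x n)

namespace nestedSqrt

variable {x : ℝ}

lemma mem_Icc (hx : 0 ≤ x) (n : ℕ) : nestedSqrt x n ∈ Set.Icc 0 x := by
  induction n with
  | zero => simp [nestedSqrt, hx]
  | succ n ih =>
    refine ⟨sqrt_nonneg _, sqrt_le_iff.2 ⟨hx, ?_⟩⟩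
    nlinarith [ih.2]

lemma sub_eq_sq_sub_sq_succ (hx : 1 ≤ x) (n : ℕ) :
    x - nestedSqrt x n = x ^ 2 - nestedSqrt x (n + 1) ^ 2 := by
  rw [nestedSqrt, sq_sqrt (by nlinarith [(mem_Icc (zero_le_one.trans hx) n).1])]
  ring

lemma sub_succ_le_div (hx : 1 ≤ x) (n : ℕ) :
    x - nestedSqrt x (n + 1) ≤ (x - nestedSqrt x n) / x := by
  obtain ⟨hs, hsx⟩ := mem_Icc (zero_le_one.trans hx) (n + 1)
  rw [le_div_iff₀ (by linarith), sub_eq_sq_sub_sq_succ hx n, mul_comm]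
  exact mul_sub_le_sq_sub_sq hs hsx

lemma summable_sub (hx : 1 < x) : Summable fun n => x - nestedSqrt x n := by
  have hnonneg n : 0 ≤ x - nestedSqrt x n := sub_nonneg.2 (mem_Icc (zero_le_one.trans hx.le) n).2
  refine summable_of_ratio_norm_eventually_le (inv_lt_one_of_one_lt₀ hx)
    (Eventually.of_forall fun n => ?_)
  rw [norm_of_nonneg (hnonneg _), norm_of_nonneg (hnonneg _), inv_mul_eq_div]
  exact sub_succ_le_div hx.le n

lemma monotone_pow_mul_sub (hx : 1 ≤ x) :
    Monotone fun n : ℕ => (2 * x) ^ (n + 1) * (x - nestedSqrt x n) := by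
  refine monotone_nat_of_le_succ fun n => ?_
  rw [pow_succ (2 * x) (n + 1), mul_assoc, sub_eq_sq_sub_sq_succ hx n]
  refine mul_le_mul_of_nonneg_left ?_ (pow_nonneg (by linarith) _)
  nlinarith [sq_nonneg (x - nestedSqrt x (n + 1))]

lemma pow_mul_sub_succ_le (hx : 1 ≤ x) (n : ℕ) :
    (2 * x) ^ (n + 2) * (x - nestedSqrt x (n + 1)) ≤
      (2 * x) ^ (n + 1) * (x - nestedSqrt x n) * (1 + (x - nestedSqrt x (n + 1)) / x) := by
  rw [pow_succ (2 * x) (n + 1), mul_assoc, mul_assoc ((2 * x) ^ (n + 1)),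
    sub_eq_sq_sub_sq_succ hx n]
  refine mul_le_mul_of_nonneg_left ?_ (pow_nonneg (by linarith) _)
  exact two_mul_mul_sub_le (by linarith) (mem_Icc (zero_le_one.trans hx) (n + 1)).1

lemma bddAbove_range_pow_mul_sub (hx : 1 < x) :
    BddAbove (Set.range fun n : ℕ => (2 * x) ^ (n + 1) * (x - nestedSqrt x n)) := by
  have hx0 : 0 ≤ x := by linarith
  refine bddAbove_range_of_le_mul_one_add (b := fun n => (x - nestedSqrt x (n + 1)) / x)
    (fun n => ?_) (fun n => ?_) ?_ (pow_mul_sub_succ_le hx.le)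
  · exact mul_nonneg (pow_nonneg (by linarith) _) (sub_nonneg.2 (mem_Icc hx0 n).2)
  · exact div_nonneg (sub_nonneg.2 (mem_Icc hx0 (n + 1)).2) hx0
  · exact ((summable_nat_add_iff 1).2 (summable_sub hx)).div_const x

end nestedSqrt

lemma rpow_succ_div_two_mul_sqrt {b : ℝ} (hb : 0 ≤ b) (c : ℝ) (n : ℕ) :
    b ^ (((n : ℝ) + 1) / 2) * √c = √(b ^ (n + 1) * c) := by
  rw [sqrt_mul (pow_nonneg hb _), sqrt_eq_rpow (b ^ (n + 1)), ← rpow_natCast, ← rpow_mul hb]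
  push_cast
  ring_nf

theorem stmt_12 (x : ℝ) (hx : 1 < x) (h : ℕ → ℝ) (h0 : h 0 = 0)
    (hrec : ∀ i, h (i + 1) = Real.sqrt (x * (x - 1) + h i)) :
    ∃ L : ℝ, Filter.Tendsto
      (fun i : ℕ => (2 * x) ^ (((i : ℝ) + 1) / 2) * Real.sqrt (x - h i))
      Filter.atTop (nhds L) := by
  obtain rfl : h = nestedSqrt x := funext fun n => by
    induction n with
    | zero => exact h0
    | succ n ih => rw [hrec, ih, nestedSqrt]
  have ha_lim := tendsto_atTop_ciSup (nestedSqrt.monotone_pow_mul_sub hx.le)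
    (nestedSqrt.bddAbove_range_pow_mul_sub hx)
  refine ⟨√(⨆ n, (2 * x) ^ (n + 1) * (x - nestedSqrt x n)),
    ((continuous_sqrt.tendsto _).comp ha_lim).congr fun n => ?_⟩
  exact (rpow_succ_div_two_mul_sqrt (by linarith) _ n).symm
end

section
/- For x > 1, since x − h_{i+1} = (x − h_i)/(x + h_{i+1}) with h_i → x, the ratio sqrt((x − h_i)/(x − h_{i+1})) converges to sqrt(2x) as i → ∞. -/
/-!
The fixed point of `t ↦ √(x(x-1) + t)` is `x`, and squaring the recursion gives
`x - hᵢ = (x - hᵢ₊₁)(x + hᵢ₊₁)`. Hence `x - hᵢ` stays positive and shrinks at least by the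
factor `1/x < 1` each step, so `hᵢ → x`, while the ratio `(x - hᵢ)/(x - hᵢ₊₁) = x + hᵢ₊₁`
tends to `2x`.
-/

open Filter Topology

section SqrtRecursion

variable {x : ℝ} {h : ℕ → ℝ}

lemma nonneg_of_sqrt_rec (hrec : ∀ i, h (i + 1) = √(x * (x - 1) + h i)) (h0 : 0 ≤ h 0) :
    ∀ i, 0 ≤ h i
  | 0 => h0
  | i + 1 => hrec i ▸ Real.sqrt_nonneg _

lemma lt_of_sqrt_rec (hx : 0 < x) (hrec : ∀ i, h (i + 1) = √(x * (x - 1) + h i))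
    (h0 : h 0 < x) : ∀ i, h i < x
  | 0 => h0
  | i + 1 => by
    rw [hrec, Real.sqrt_lt' hx]
    nlinarith [lt_of_sqrt_rec hx hrec h0 i]

lemma sub_eq_sub_succ_mul_add (hx : 1 ≤ x) (hrec : ∀ i, h (i + 1) = √(x * (x - 1) + h i))
    (h_nonneg : ∀ i, 0 ≤ h i) (i : ℕ) :
    x - h i = (x - h (i + 1)) * (x + h (i + 1)) := by
  have hsq : h (i + 1) ^ 2 = x * (x - 1) + h i := by
    rw [hrec, Real.sq_sqrt]
    nlinarith [h_nonneg i]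
  linear_combination hsq

lemma sub_succ_le_div (hx : 1 ≤ x) (hrec : ∀ i, h (i + 1) = √(x * (x - 1) + h i))
    (h_nonneg : ∀ i, 0 ≤ h i) (h_le : ∀ i, h i ≤ x) (i : ℕ) :
    x - h (i + 1) ≤ (x - h i) / x := by
  have hx0 : 0 < x := by linarith
  rw [le_div_iff₀ hx0, sub_eq_sub_succ_mul_add hx hrec h_nonneg i]
  exact mul_le_mul_of_nonneg_left (by linarith [h_nonneg (i + 1)]) (by linarith [h_le (i + 1)])

lemma sub_le_geometric (hx : 1 ≤ x) (hrec : ∀ i, h (i + 1) = √(x * (x - 1) + h i))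
    (h_nonneg : ∀ i, 0 ≤ h i) (h_le : ∀ i, h i ≤ x) (i : ℕ) :
    x - h i ≤ (x - h 0) * x⁻¹ ^ i := by
  induction i with
  | zero => simp
  | succ i ih =>
    calc x - h (i + 1) ≤ (x - h i) / x := sub_succ_le_div hx hrec h_nonneg h_le i
      _ ≤ (x - h 0) * x⁻¹ ^ i / x := by gcongr
      _ = (x - h 0) * x⁻¹ ^ (i + 1) := by rw [pow_succ, div_eq_mul_inv, mul_assoc]

lemma tendsto_of_sqrt_rec (hx : 1 < x) (hrec : ∀ i, h (i + 1) = √(x * (x - 1) + h i))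
    (h_nonneg : ∀ i, 0 ≤ h i) (h_le : ∀ i, h i ≤ x) : Tendsto h atTop (𝓝 x) := by
  have hgeo : Tendsto (fun i => (x - h 0) * x⁻¹ ^ i) atTop (𝓝 0) := by
    simpa using (tendsto_pow_atTop_nhds_zero_of_lt_one (by positivity)
      (inv_lt_one_of_one_lt₀ hx)).const_mul (x - h 0)
  have hsub : Tendsto (fun i => x - h i) atTop (𝓝 0) :=
    squeeze_zero (fun i => sub_nonneg.mpr (h_le i)) (sub_le_geometric hx.le hrec h_nonneg h_le) hgeo
  simpa using hsub.const_sub x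

end SqrtRecursion

theorem stmt_13_general (x : ℝ) (hx : 1 < x) (h : ℕ → ℝ) (h0 : h 0 = 0)
    (hrec : ∀ i, h (i + 1) = Real.sqrt (x * (x - 1) + h i)) :
    Filter.Tendsto (fun i => Real.sqrt ((x - h i) / (x - h (i + 1))))
      Filter.atTop (nhds (Real.sqrt (2 * x))) := by
  have h_nonneg := nonneg_of_sqrt_rec hrec h0.ge
  have h_lt := lt_of_sqrt_rec (by linarith) hrec (by rw [h0]; linarith)
  have h_ratio : ∀ i, (x - h i) / (x - h (i + 1)) = x + h (i + 1) := fun i => by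
    rw [sub_eq_sub_succ_mul_add hx.le hrec h_nonneg i,
      mul_div_cancel_left₀ _ (sub_ne_zero.mpr (h_lt (i + 1)).ne')]
  have h_succ : Tendsto (fun i => h (i + 1)) atTop (𝓝 x) :=
    (tendsto_of_sqrt_rec hx hrec h_nonneg fun i => (h_lt i).le).comp (tendsto_add_atTop_nat 1)
  simp only [h_ratio]
  rw [two_mul]
  exact (h_succ.const_add x).sqrt

theorem stmt_13 (x : ℝ) (hx : 1 < x) (h : ℕ → ℝ) (h0 : h 0 = 0)
    (hrec : ∀ i, h (i + 1) = Real.sqrt (x * (x - 1) + h i))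
    (hlt : ∀ i, h i < x) :
    Filter.Tendsto (fun i => Real.sqrt ((x - h i) / (x - h (i + 1))))
      Filter.atTop (nhds (Real.sqrt (2 * x))) :=
  stmt_13_general x hx h h0 hrec
end

section
/- For x > 1, the sequence of squares Π_i(x)² = (2x)^{i+1}(x − h_i(x)) is monotone increasing in i, where h_0 = 0 and h_{i+1} = sqrt(x(x−1) + h_i). -/
/-!
Writing `s = √(x(x-1) + a)`, one has `(x - s)(x + s) = x - a`, and `x + s ≤ 2x` as soon as `a ≤ x`.
Hence `x - hᵢ ≤ 2x (x - hᵢ₊₁)`, and multiplying by `(2x)^(i+1)` gives the monotonicity step;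
the invariant `0 ≤ hᵢ ≤ x` is preserved by the recursion.
-/

namespace NestedSqrt

variable {x a : ℝ}

lemma radicand_nonneg (hx : 1 ≤ x) (ha : 0 ≤ a) : 0 ≤ x * (x - 1) + a := by
  nlinarith

lemma sqrt_radicand_le (hx : 1 ≤ x) (hax : a ≤ x) : √(x * (x - 1) + a) ≤ x :=
  Real.sqrt_le_iff.mpr ⟨by linarith, by nlinarith⟩

lemma sub_eq_sub_sqrt_mul_add_sqrt (hx : 1 ≤ x) (ha : 0 ≤ a) :
    x - a = (x - √(x * (x - 1) + a)) * (x + √(x * (x - 1) + a)) := by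
  have hsq := Real.sq_sqrt (radicand_nonneg hx ha)
  linear_combination hsq

lemma sub_le_two_mul_mul_sub_sqrt (hx : 1 ≤ x) (ha : 0 ≤ a) (hax : a ≤ x) :
    x - a ≤ 2 * x * (x - √(x * (x - 1) + a)) := by
  have hs := sqrt_radicand_le hx hax
  calc x - a = (x - √(x * (x - 1) + a)) * (x + √(x * (x - 1) + a)) :=
        sub_eq_sub_sqrt_mul_add_sqrt hx ha
    _ ≤ (x - √(x * (x - 1) + a)) * (2 * x) := by gcongr; linarith
    _ = 2 * x * (x - √(x * (x - 1) + a)) := mul_comm _ _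

lemma mem_Icc_of_rec (hx : 1 ≤ x) {h : ℕ → ℝ} (h0 : h 0 = 0)
    (hrec : ∀ i, h (i + 1) = √(x * (x - 1) + h i)) (i : ℕ) : h i ∈ Set.Icc 0 x := by
  induction i with
  | zero => exact h0 ▸ ⟨le_rfl, by linarith⟩
  | succ i ih => exact hrec i ▸ ⟨Real.sqrt_nonneg _, sqrt_radicand_le hx ih.2⟩

end NestedSqrt

open NestedSqrt in
theorem stmt_19 (x : ℝ) (hx : 1 < x) (h : ℕ → ℝ) (h0 : h 0 = 0)
    (hrec : ∀ i, h (i + 1) = Real.sqrt (x * (x - 1) + h i)) :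
    Monotone (fun i : ℕ => (2 * x) ^ (i + 1) * (x - h i)) := by
  refine monotone_nat_of_le_succ fun i => ?_
  obtain ⟨hi0, hix⟩ := mem_Icc_of_rec hx.le h0 hrec i
  have hstep : x - h i ≤ 2 * x * (x - h (i + 1)) :=
    hrec i ▸ sub_le_two_mul_mul_sub_sqrt hx.le hi0 hix
  calc (2 * x) ^ (i + 1) * (x - h i) ≤ (2 * x) ^ (i + 1) * (2 * x * (x - h (i + 1))) := by gcongr
    _ = (2 * x) ^ (i + 1 + 1) * (x - h (i + 1)) := by ring
end
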